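/- Let s > 0, let c_U, y₀ be real numbers with (1 − 1/s)² − 4c_U/s > 0, set Ξ = √((1 − 1/s)² − 4c_U/s), and assume |2y₀ − (1 − 1/s)| < Ξ. Let t₁ < t₂, let Ψ : ℝ → ℝ be a continuous function with Ψ(t) ≤ c_U for all t ∈ [t₁, t₂], and let y : ℝ → ℝ be differentiable on [t₁, t₂] with y(t₁) = y₀ and y′(t) = (s − 1)·y(t) − s·y(t)² − Ψ(t) for all t ∈ [t₁, t₂]. Then y(t) ≥ T(t − t₁ | y₀, s, c_U) for all t ∈ [t₁, t₂], where T is the tanh-formula with parameters (y₀, s, c_U). -/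

import Mathlib

/-- The real inverse hyperbolic tangent, `arctanh x = ½ log((1+x)/(1-x))`,
defined for `x ∈ (-1, 1)`. -/
noncomputable def arctanh (x : ℝ) : ℝ := (1 / 2) * Real.log ((1 + x) / (1 - x))

/-- The tanh-formula `T(t | y₀, s, c)`. -/
noncomputable def tanhFormula (y₀ s c t : ℝ) : ℝ :=
  (1 / 2) * (1 - 1 / s) +
    (Real.sqrt ((1 - 1 / s) ^ 2 - 4 * c / s) / 2) *
      Real.tanh ((s * Real.sqrt ((1 - 1 / s) ^ 2 - 4 * c / s) / 2) * t +
        arctanh ((2 * y₀ - (1 - 1 / s)) / Real.sqrt ((1 - 1 / s) ^ 2 - 4 * c / s)))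

/-!
The tanh-formula `T` solves the Riccati equation with the constant forcing `c_U` and `T(0) = y₀`.
Since `y² - T² = (y + T)(y - T)`, the difference `w = y - T(· - t₁)` satisfies
`w' = g w + (c_U - Ψ) ≥ g w` with the continuous coefficient `g = (s - 1) - s (y + T)`.
On the compact interval `g ≤ L` for some `L`, and then `w` can never reach the barrier
`-ε e^{(L+1)(t - t₁)}`: where they meet, `w' ≥ g w ≥ -L ε e^{(L+1)(t - t₁)}`, which exceeds
the slope of the barrier. Letting `ε → 0` gives `w ≥ 0`.
-/

open Set

theorem Real.hasDerivAt_tanh (x : ℝ) : HasDerivAt Real.tanh (1 - Real.tanh x ^ 2) x := by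
  have h := (Real.hasDerivAt_sinh x).div (Real.hasDerivAt_cosh x) (Real.cosh_pos x).ne'
  rw [show Real.tanh = Real.sinh / Real.cosh from funext Real.tanh_eq_sinh_div_cosh]
  refine h.congr_deriv ?_
  rw [Pi.div_apply]
  have := Real.cosh_sq_sub_sinh_sq x
  field_simp

theorem arctanh_eq_artanh {x : ℝ} (hx : x ∈ Icc (-1) 1) : arctanh x = Real.artanh x :=
  (Real.artanh_eq_half_log hx).symm

theorem tanh_arctanh {x : ℝ} (hx : |x| < 1) : Real.tanh (arctanh x) = x := by
  have hx' : x ∈ Ioo (-1) 1 := abs_lt.mp hx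
  rw [arctanh_eq_artanh (Ioo_subset_Icc_self hx'), Real.tanh_artanh hx']

theorem tanhFormula_zero {y₀ s c : ℝ} (hs : s ≠ 0)
    (hy₀ : |2 * y₀ - (1 - 1 / s)| < Real.sqrt ((1 - 1 / s) ^ 2 - 4 * c / s)) :
    tanhFormula y₀ s c 0 = y₀ := by
  rw [tanhFormula, mul_zero, zero_add]
  generalize Real.sqrt ((1 - 1 / s) ^ 2 - 4 * c / s) = Ξ at hy₀ ⊢
  have hΞ : 0 < Ξ := (abs_nonneg _).trans_lt hy₀
  have habs : |(2 * y₀ - (1 - 1 / s)) / Ξ| < 1 := by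
    rwa [abs_div, abs_of_pos hΞ, div_lt_one hΞ]
  rw [tanh_arctanh habs]
  field_simp
  ring

theorem tanhFormula_hasDerivAt {y₀ s c : ℝ} (hs : s ≠ 0)
    (hdisc : 0 ≤ (1 - 1 / s) ^ 2 - 4 * c / s) (t : ℝ) :
    HasDerivAt (tanhFormula y₀ s c)
      ((s - 1) * tanhFormula y₀ s c t - s * tanhFormula y₀ s c t ^ 2 - c) t := by
  have hΞ := Real.sq_sqrt hdisc
  unfold tanhFormula
  generalize Real.sqrt ((1 - 1 / s) ^ 2 - 4 * c / s) = Ξ at hΞ ⊢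
  generalize arctanh ((2 * y₀ - (1 - 1 / s)) / Ξ) = Ω
  have hlin : HasDerivAt (fun t : ℝ => s * Ξ / 2 * t + Ω) (s * Ξ / 2) t := by
    simpa using ((hasDerivAt_id t).const_mul (s * Ξ / 2)).add_const Ω
  refine ((((Real.hasDerivAt_tanh _).comp t hlin).const_mul (Ξ / 2)).const_add
    (1 / 2 * (1 - 1 / s))).congr_deriv ?_
  generalize Real.tanh (s * Ξ / 2 * t + Ω) = τ
  field_simp
  field_simp at hΞ
  linear_combination hΞ

theorem nonneg_of_deriv_ge_mul_of_le {w w' g : ℝ → ℝ} {a b L : ℝ}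
    (hw : ContinuousOn w (Icc a b))
    (hw' : ∀ x ∈ Ico a b, HasDerivWithinAt w (w' x) (Ici x) x)
    (hineq : ∀ x ∈ Ico a b, g x * w x ≤ w' x) (hg : ∀ x ∈ Ico a b, g x ≤ L)
    (ha : 0 ≤ w a) : ∀ x ∈ Icc a b, 0 ≤ w x := by
  have barrier : ∀ ε > 0, ∀ x ∈ Icc a b, -ε * Real.exp ((L + 1) * (x - a)) ≤ w x := by
    intro ε hε
    have hderiv (x : ℝ) : HasDerivAt (fun x => -ε * Real.exp ((L + 1) * (x - a)))
        (-ε * (Real.exp ((L + 1) * (x - a)) * (L + 1))) x := by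
      simpa using (((hasDerivAt_id x).sub_const a).const_mul (L + 1)).exp.const_mul (-ε)
    refine image_le_of_deriv_right_lt_deriv_boundary'
      (fun x _ => (hderiv x).continuousAt.continuousWithinAt)
      (fun x _ => (hderiv x).hasDerivWithinAt) ?_ hw hw' ?_
    · simpa using ha.trans' (neg_nonpos.mpr hε.le)
    · intro x hx hwx
      have hE : 0 < ε * Real.exp ((L + 1) * (x - a)) := mul_pos hε (Real.exp_pos _)
      have := hineq x hx
      rw [← hwx] at this
      nlinarith [hg x hx]
  intro x hx
  refine le_of_forall_pos_le_add fun δ hδ => ?_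
  have hE := Real.exp_pos ((L + 1) * (x - a))
  have := barrier (δ / Real.exp ((L + 1) * (x - a))) (div_pos hδ hE) x hx
  rw [neg_mul, div_mul_cancel₀ _ hE.ne'] at this
  linarith

theorem nonneg_of_deriv_ge_mul {w w' g : ℝ → ℝ} {a b : ℝ}
    (hw : ContinuousOn w (Icc a b))
    (hw' : ∀ x ∈ Ico a b, HasDerivWithinAt w (w' x) (Ici x) x)
    (hineq : ∀ x ∈ Ico a b, g x * w x ≤ w' x) (hg : ContinuousOn g (Icc a b))
    (ha : 0 ≤ w a) : ∀ x ∈ Icc a b, 0 ≤ w x := by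
  obtain ⟨L, hL⟩ := isCompact_Icc.bddAbove_image hg
  exact nonneg_of_deriv_ge_mul_of_le hw hw' hineq
    (fun x hx => hL (mem_image_of_mem g (Ico_subset_Icc_self hx))) ha

theorem le_of_riccati_of_forcing_le {s c a b : ℝ} {y T Ψ : ℝ → ℝ}
    (hΨ : ∀ x ∈ Icc a b, Ψ x ≤ c)
    (hy : ∀ x ∈ Icc a b,
      HasDerivWithinAt y ((s - 1) * y x - s * y x ^ 2 - Ψ x) (Icc a b) x)
    (hT : ∀ x ∈ Icc a b,
      HasDerivWithinAt T ((s - 1) * T x - s * T x ^ 2 - c) (Icc a b) x)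
    (ha : T a ≤ y a) : ∀ x ∈ Icc a b, T x ≤ y x := by
  have hyc : ContinuousOn y (Icc a b) := fun x hx => (hy x hx).continuousWithinAt
  have hTc : ContinuousOn T (Icc a b) := fun x hx => (hT x hx).continuousWithinAt
  have hdiff : ∀ x ∈ Ico a b, HasDerivWithinAt (y - T)
      (((s - 1) * y x - s * y x ^ 2 - Ψ x) - ((s - 1) * T x - s * T x ^ 2 - c)) (Ici x) x :=
    fun x hx => ((hy x (Ico_subset_Icc_self hx)).sub
      (hT x (Ico_subset_Icc_self hx))).mono_of_mem_nhdsWithin (Icc_mem_nhdsGE_of_mem hx)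
  have hineq : ∀ x ∈ Ico a b, ((s - 1) - s * (y x + T x)) * (y - T) x ≤
      ((s - 1) * y x - s * y x ^ 2 - Ψ x) - ((s - 1) * T x - s * T x ^ 2 - c) := by
    intro x hx
    have := hΨ x (Ico_subset_Icc_self hx)
    simp only [Pi.sub_apply]
    linarith
  have hg : ContinuousOn (fun x => (s - 1) - s * (y x + T x)) (Icc a b) := by fun_prop
  intro x hx
  exact sub_nonneg.mp (nonneg_of_deriv_ge_mul (hyc.sub hTc) hdiff hineq hg (sub_nonneg.mpr ha) x hx)

theorem prevalence_lower_bound_general (s cU y₀ t₁ t₂ : ℝ) (hs : 0 < s)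
    (hy₀ : |2 * y₀ - (1 - 1 / s)| < Real.sqrt ((1 - 1 / s) ^ 2 - 4 * cU / s))
    (Ψ : ℝ → ℝ) (hΨ : ∀ t ∈ Set.Icc t₁ t₂, Ψ t ≤ cU)
    (y : ℝ → ℝ) (hinit : y t₁ = y₀)
    (hode : ∀ t ∈ Set.Icc t₁ t₂,
      HasDerivWithinAt y ((s - 1) * y t - s * (y t) ^ 2 - Ψ t) (Set.Icc t₁ t₂) t) :
    ∀ t ∈ Set.Icc t₁ t₂, tanhFormula y₀ s cU (t - t₁) ≤ y t := by
  have hdisc : 0 ≤ (1 - 1 / s) ^ 2 - 4 * cU / s :=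
    (Real.sqrt_pos.mp ((abs_nonneg _).trans_lt hy₀)).le
  refine le_of_riccati_of_forcing_le hΨ hode (fun t _ => ?_) ?_
  · exact ((tanhFormula_hasDerivAt hs.ne' hdisc (t - t₁)).comp_sub_const t t₁).hasDerivWithinAt
  · rw [sub_self, tanhFormula_zero hs.ne' hy₀, hinit]

/-- If the remainder `Ψ` is bounded above by `c_U` on `[t₁, t₂]` and `y` solves
`y' = (s-1)y - sy² - Ψ(t)` there with `y(t₁) = y₀`, then
`y(t) ≥ T(t - t₁ | y₀, s, c_U)` on `[t₁, t₂]`. -/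
theorem prevalence_lower_bound (s cU y₀ t₁ t₂ : ℝ) (hs : 0 < s)
    (hdisc : 0 < (1 - 1 / s) ^ 2 - 4 * cU / s)
    (hy₀ : |2 * y₀ - (1 - 1 / s)| < Real.sqrt ((1 - 1 / s) ^ 2 - 4 * cU / s))
    (ht : t₁ < t₂) (Ψ : ℝ → ℝ) (hΨcont : Continuous Ψ)
    (hΨ : ∀ t ∈ Set.Icc t₁ t₂, Ψ t ≤ cU)
    (y : ℝ → ℝ) (hinit : y t₁ = y₀)
    (hode : ∀ t ∈ Set.Icc t₁ t₂,
      HasDerivWithinAt y ((s - 1) * y t - s * (y t) ^ 2 - Ψ t) (Set.Icc t₁ t₂) t) :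
    ∀ t ∈ Set.Icc t₁ t₂, tanhFormula y₀ s cU (t - t₁) ≤ y t :=
  prevalence_lower_bound_general s cU y₀ t₁ t₂ hs hy₀ Ψ hΨ y hinit hode
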